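/- For every natural number N ≥ 1 and every n ≥ 1, every n-admissible path in the PIPE transition system contains at most 2n + (N + 1) ticks. -/
import Mathlib


/-- Actions of the PIPE system: `in`, `out`, and internal transfers `t i`. -/
inductive PAct : Type
  | ins | outs | t (i : ℕ)
deriving DecidableEq

/-- Configurations of the PIPE transition system: a cell-occupancy function
`b : ℕ → Bool` (only indices `0, …, N+1` are relevant) together with the set of
urgent actions. -/
abbrev PConf : Type := (ℕ → Bool) × Set PAct

/-- Enabledness of an action in an occupancy `b` (for the chain of `N + 2` cells):
`in` iff cell `N+1` is empty, `out` iff cell `0` is full, and `t i` (for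
`1 ≤ i ≤ N+1`) iff cell `i` is full and cell `i-1` is empty. -/
def PEnabled (N : ℕ) (b : ℕ → Bool) : PAct → Prop
  | PAct.ins => b (N + 1) = false
  | PAct.outs => b 0 = true
  | PAct.t i => 1 ≤ i ∧ i ≤ N + 1 ∧ b i = true ∧ b (i - 1) = false

/-- The effect of an action on the occupancy `b`. -/
def PUpdate (N : ℕ) (b : ℕ → Bool) : PAct → (ℕ → Bool)
  | PAct.ins => Function.update b (N + 1) true
  | PAct.outs => Function.update b 0 false
  | PAct.t i => Function.update (Function.update b i false) (i - 1) true

/-- Labels of steps in the PIPE transition system: a tick, or an action step. -/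
inductive PLabel : Type
  | tick | act (a : PAct)
deriving DecidableEq

/-- Steps of the PIPE transition system: an enabled action may occur (and is removed
from the urgent set); a tick may occur iff no urgent action is enabled, and afterwards
all enabled actions are urgent. -/
inductive PStep (N : ℕ) : PConf → PLabel → PConf → Prop
  | act (b : ℕ → Bool) (U : Set PAct) (a : PAct) (h : PEnabled N b a) :
      PStep N (b, U) (PLabel.act a) (PUpdate N b a, U \ {a})
  | tick (b : ℕ → Bool) (U : Set PAct) (h : ∀ a ∈ U, ¬ PEnabled N b a) :
      PStep N (b, U) PLabel.tick (b, {a | PEnabled N b a})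

/-- `PPath N c ls` : `ls` is the sequence of labels of a finite path of consecutive
steps starting in configuration `c`. -/
inductive PPath (N : ℕ) : PConf → List PLabel → Prop
  | nil (c : PConf) : PPath N c []
  | cons {c c' : PConf} {l : PLabel} {ls : List PLabel} :
      PStep N c l c' → PPath N c' ls → PPath N c (l :: ls)

/-- A path of the PIPE system: a path starting in the initial configuration
(all cells empty, no urgent actions). -/
def PipePath (N : ℕ) (ls : List PLabel) : Prop := PPath N (fun _ => false, ∅) ls

/-- An `n`-admissible path of the PIPE system: at most `n` `in`-steps and
at most `n - 1` `out`-steps. -/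
def PipeAdmissible (N n : ℕ) (ls : List PLabel) : Prop :=
  PipePath N ls ∧ ls.count (PLabel.act PAct.ins) ≤ n ∧
    ls.count (PLabel.act PAct.outs) ≤ n - 1

/-- The response performance of the PIPE buffer: the supremum (in `ℕ∞`) of the
number of ticks over all `n`-admissible paths. -/
noncomputable def rpPipe (N n : ℕ) : ℕ∞ :=
  sSup {k : ℕ∞ | ∃ ls : List PLabel, PipeAdmissible N n ls ∧ (ls.count PLabel.tick : ℕ∞) = k}

namespace PipeCert
open scoped Classical
noncomputable section

def tv (x : Bool) : ℤ := if x then 1 else 0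
def F (N : ℕ) (b : ℕ → Bool) (c : ℕ) : ℤ :=
  ∑ i ∈ Finset.range (N + 2), (if i < c then tv (b i) else 1 - tv (b i))
def kk (N : ℕ) (b : ℕ → Bool) : ℤ := ∑ i ∈ Finset.range (N + 2), tv (b i)

def iot (N : ℕ) (b : ℕ → Bool) (U : Set PAct) : ℤ :=
  if PAct.ins ∈ U ∧ b (N + 1) = false then 1 else 0
def omg (b : ℕ → Bool) (U : Set PAct) : ℤ :=
  if PAct.outs ∈ U ∧ b 0 = true then 1 else 0
def tterm (N : ℕ) (b : ℕ → Bool) (U : Set PAct) (c : ℕ) : ℤ :=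
  if PAct.t c ∈ U ∧ PEnabled N b (PAct.t c) then 2 else 0

def fU (N : ℕ) (b : ℕ → Bool) (U : Set PAct) (c : ℕ) : ℤ :=
  F N b c + tterm N b U c + iot N b U * (if c = N + 2 then 1 else -1)
    + omg b U * (if c = 0 then 1 else -1)

def M (N : ℕ) (b : ℕ → Bool) (U : Set PAct) : ℤ :=
  (Finset.range (N + 3)).inf' (by simp) (fU N b U)

def g (N : ℕ) (b : ℕ → Bool) (U : Set PAct) : ℤ :=
  kk N b + 1 - iot N b U - omg b U - M N b U

lemma PEnabled_ins_iff (N : ℕ) (b : ℕ → Bool) :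
    PEnabled N b PAct.ins ↔ b (N + 1) = false := Iff.rfl
lemma PEnabled_outs_iff (N : ℕ) (b : ℕ → Bool) :
    PEnabled N b PAct.outs ↔ b 0 = true := Iff.rfl
lemma PEnabled_t_iff (N : ℕ) (b : ℕ → Bool) (i : ℕ) :
    PEnabled N b (PAct.t i) ↔ 1 ≤ i ∧ i ≤ N + 1 ∧ b i = true ∧ b (i - 1) = false := Iff.rfl

lemma iot_nonneg (N b U) : 0 ≤ iot N b U := by unfold iot; split <;> simp
lemma iot_le_one (N b U) : iot N b U ≤ 1 := by unfold iot; split <;> simp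
lemma omg_nonneg (b U) : 0 ≤ omg b U := by unfold omg; split <;> simp
lemma omg_le_one (b U) : omg b U ≤ 1 := by unfold omg; split <;> simp
lemma tterm_nonneg (N b U c) : 0 ≤ tterm N b U c := by unfold tterm; split <;> simp
lemma tterm_le_two (N b U c) : tterm N b U c ≤ 2 := by unfold tterm; split <;> simp

lemma M_le (N b U) {c : ℕ} (hc : c < N + 3) : M N b U ≤ fU N b U c :=
  Finset.inf'_le _ (Finset.mem_range.2 hc)

lemma le_M (N b U) {x : ℤ} (h : ∀ c, c < N + 3 → x ≤ fU N b U c) : x ≤ M N b U :=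
  Finset.le_inf' _ _ fun c hc => h c (Finset.mem_range.1 hc)

lemma F_nonneg (N : ℕ) (b : ℕ → Bool) (c : ℕ) : 0 ≤ F N b c := by
  refine Finset.sum_nonneg fun i _ => ?_
  by_cases h : i < c <;> simp [h] <;> cases b i <;> simp [tv]

lemma F_last (N : ℕ) (b : ℕ → Bool) : F N b (N + 2) = kk N b := by
  refine Finset.sum_congr rfl fun i hi => ?_
  have := Finset.mem_range.1 hi
  simp [show i < N + 2 from this]

lemma F_succ (N : ℕ) (b : ℕ → Bool) (c : ℕ) (hc : c < N + 2) :
    F N b (c + 1) = F N b c + (if b c then 1 else -1) := by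
  unfold F
  rw [← Finset.sum_erase_add _ _ (Finset.mem_range.2 hc),
      ← Finset.sum_erase_add _ _ (Finset.mem_range.2 hc)]
  have h1 : ∀ i ∈ (Finset.range (N + 2)).erase c,
      (if i < c + 1 then tv (b i) else 1 - tv (b i))
        = (if i < c then tv (b i) else 1 - tv (b i)) := by
    intro i hi
    have hne : i ≠ c := Finset.ne_of_mem_erase hi
    have : i < c + 1 ↔ i < c := by omega
    simp [this]
  rw [Finset.sum_congr rfl h1]
  rw [if_pos (by omega : c < c + 1), if_neg (by omega : ¬ c < c)]
  cases hb : b c <;> simp [tv] <;> ring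

lemma F_update (N : ℕ) (b : ℕ → Bool) (j : ℕ) (hj : j < N + 2) (v : Bool) (c : ℕ) :
    F N (Function.update b j v) c
      = F N b c + (if j < c then tv v - tv (b j) else tv (b j) - tv v) := by
  unfold F
  rw [← Finset.sum_erase_add _ _ (Finset.mem_range.2 hj),
      ← Finset.sum_erase_add _ _ (Finset.mem_range.2 hj)]
  have h1 : ∀ i ∈ (Finset.range (N + 2)).erase j,
      (if i < c then tv (Function.update b j v i) else 1 - tv (Function.update b j v i))
        = (if i < c then tv (b i) else 1 - tv (b i)) := by
    intro i hi
    rw [Function.update_of_ne (Finset.ne_of_mem_erase hi)]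
  rw [Finset.sum_congr rfl h1, Function.update_self]
  by_cases hjc : j < c <;> simp [hjc] <;> ring

lemma kk_update (N : ℕ) (b : ℕ → Bool) (j : ℕ) (hj : j < N + 2) (v : Bool) :
    kk N (Function.update b j v) = kk N b + tv v - tv (b j) := by
  unfold kk
  rw [← Finset.sum_erase_add _ _ (Finset.mem_range.2 hj),
      ← Finset.sum_erase_add _ _ (Finset.mem_range.2 hj)]
  have h1 : ∀ i ∈ (Finset.range (N + 2)).erase j,
      tv (Function.update b j v i) = tv (b i) := by
    intro i hi
    rw [Function.update_of_ne (Finset.ne_of_mem_erase hi)]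
  rw [Finset.sum_congr rfl h1, Function.update_self]
  ring

/-- g is nonnegative. -/
lemma g_nonneg (N : ℕ) (b : ℕ → Bool) (U : Set PAct) : 0 ≤ g N b U := by
  unfold g
  by_cases hb : b (N + 1) = false
  · have hM : M N b U ≤ fU N b U (N + 1) := M_le N b U (by omega)
    have ht : tterm N b U (N + 1) = 0 := by
      unfold tterm
      rw [if_neg]
      rintro ⟨-, -, -, h3, -⟩
      rw [hb] at h3; exact Bool.noConfusion h3
    have hF2 : F N b (N + 2) = F N b (N + 1) + (if b (N+1) then 1 else -1) :=
      F_succ N b (N + 1) (by omega)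
    rw [hb, F_last] at hF2
    have hF : F N b (N + 1) = kk N b + 1 := by simp at hF2; linarith
    have hfU : fU N b U (N + 1) = kk N b + 1 - iot N b U - omg b U := by
      unfold fU
      rw [ht, hF, if_neg (by omega : ¬ (N+1) = N + 2), if_neg (by omega : ¬ (N+1) = 0)]
      ring
    rw [hfU] at hM
    linarith
  · have hb' : b (N + 1) = true := by
      cases h : b (N + 1)
      · exact absurd h hb
      · rfl
    have hiot : iot N b U = 0 := by
      unfold iot
      rw [if_neg]
      rintro ⟨-, h2⟩
      rw [hb'] at h2; exact Bool.noConfusion h2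
    have hM : M N b U ≤ fU N b U (N + 2) := M_le N b U (by omega)
    have ht : tterm N b U (N + 2) = 0 := by
      unfold tterm
      rw [if_neg]
      rintro ⟨-, -, h2, -⟩
      omega
    have hfU : fU N b U (N + 2) = kk N b + iot N b U - omg b U := by
      unfold fU
      rw [ht, F_last, if_pos rfl, if_neg (by omega : ¬ (N+2) = 0)]
      ring
    rw [hfU] at hM
    linarith

/-- g at the initial configuration is at most 1. -/
lemma g_init (N : ℕ) : g N (fun _ => false) (∅ : Set PAct) ≤ 1 := by
  unfold g
  have hkk : kk N (fun _ => false) = 0 := by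
    unfold kk; simp [tv]
  have hiot : iot N (fun _ => false) (∅ : Set PAct) = 0 := by unfold iot; simp
  have homg : omg (fun _ => false) (∅ : Set PAct) = 0 := by unfold omg; simp
  have hM : (0 : ℤ) ≤ M N (fun _ => false) ∅ := by
    refine le_M _ _ _ fun c hc => ?_
    unfold fU tterm iot omg
    simp only [Set.mem_empty_iff_false, false_and, if_false]
    have := F_nonneg N (fun _ => false) c
    simp
    linarith
  rw [hkk, hiot, homg]
  linarith


/-- Tick decreases g by at least 1. -/
lemma g_tick (N : ℕ) (b : ℕ → Bool) (U : Set PAct)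
    (h : ∀ a ∈ U, ¬ PEnabled N b a) :
    g N b {a | PEnabled N b a} ≤ g N b U - 1 := by
  -- pre-state simplifications
  have hiot : iot N b U = 0 := by
    unfold iot; rw [if_neg]; rintro ⟨h1, h2⟩; exact h _ h1 h2
  have homg : omg b U = 0 := by
    unfold omg; rw [if_neg]; rintro ⟨h1, h2⟩; exact h _ h1 h2
  have htt : ∀ c, tterm N b U c = 0 := by
    intro c; unfold tterm; rw [if_neg]; rintro ⟨h1, h2⟩; exact h _ h1 h2
  have hfUold : ∀ c, fU N b U c = F N b c := by
    intro c; unfold fU; rw [htt, hiot, homg]; ring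
  set d := M N b U with hd
  have hdle : ∀ c, c < N + 3 → d ≤ F N b c := by
    intro c hc; rw [← hfUold]; exact M_le N b U hc
  set U' : Set PAct := {a | PEnabled N b a} with hU'
  have hmem : ∀ a : PAct, a ∈ U' ↔ PEnabled N b a := fun a => Iff.rfl
  set ι := iot N b U' with hι
  set ω := omg b U' with hω
  have hι01 : 0 ≤ ι ∧ ι ≤ 1 := ⟨iot_nonneg _ _ _, iot_le_one _ _ _⟩
  have hω01 : 0 ≤ ω ∧ ω ≤ 1 := ⟨omg_nonneg _ _, omg_le_one _ _⟩
  -- the key pointwise bound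
  have key : d + 1 - ι - ω ≤ M N b U' := by
    refine le_M _ _ _ fun c hc => ?_
    unfold fU
    have hιb : ι * (if c = N + 2 then 1 else -1) ≥ -ι := by
      split <;> [linarith [hι01.1]; linarith]
    have hωb : ω * (if c = 0 then 1 else -1) ≥ -ω := by
      split <;> [linarith [hω01.1]; linarith]
    rcases Nat.eq_zero_or_pos c with hc0 | hcpos
    · -- c = 0
      subst hc0
      by_cases hb0 : b 0 = true
      · have hω1 : ω = 1 := by
          rw [hω]; unfold omg; rw [if_pos ⟨(hmem PAct.outs).2 hb0, hb0⟩]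
        have h1 : d ≤ F N b 0 := hdle 0 (by omega)
        have h2 : (0:ℤ) ≤ tterm N b U' 0 := tterm_nonneg _ _ _ _
        rw [if_pos rfl]
        have : ι * (if (0:ℕ) = N + 2 then 1 else -1) = -ι := by
          rw [if_neg (by omega : ¬ (0:ℕ) = N + 2)]; ring
        rw [this, hω1]
        linarith
      · have hb0' : b 0 = false := by
          cases hx : b 0
          · rfl
          · exact absurd hx hb0
        have hω0 : ω = 0 := by
          rw [hω]; unfold omg; rw [if_neg]; rintro ⟨-, h2⟩; exact hb0 h2
        have hF1 : F N b 1 = F N b 0 + -1 := by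
          have := F_succ N b 0 (by omega); rw [hb0'] at this; simpa using this
        have h1 : d ≤ F N b 1 := hdle 1 (by omega)
        have h2 : (0:ℤ) ≤ tterm N b U' 0 := tterm_nonneg _ _ _ _
        have : ι * (if (0:ℕ) = N + 2 then 1 else -1) = -ι := by
          rw [if_neg (by omega : ¬ (0:ℕ) = N + 2)]; ring
        rw [this, if_pos rfl, hω0]
        linarith
    · rcases Nat.lt_or_ge c (N + 2) with hcsmall | hcbig
      · -- 1 ≤ c ≤ N + 1
        have hifs : ι * (if c = N + 2 then 1 else -1) = -ι := by
          rw [if_neg (by omega : ¬ c = N + 2)]; ring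
        have hifs2 : ω * (if c = 0 then 1 else -1) = -ω := by
          rw [if_neg (by omega : ¬ c = 0)]; ring
        rw [hifs, hifs2]
        by_cases hbc : b c = true
        · by_cases hbc1 : b (c - 1) = false
          · -- t c enabled
            have hen : PEnabled N b (PAct.t c) := ⟨hcpos, by omega, hbc, hbc1⟩
            have htt2 : tterm N b U' c = 2 := by
              unfold tterm; rw [if_pos ⟨(hmem _).2 hen, hen⟩]
            have h1 : d ≤ F N b c := hdle c (by omega)
            rw [htt2]
            linarith
          · -- b c = true, b (c-1) = true
            have hbc1' : b (c - 1) = true := by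
              cases hx : b (c - 1)
              · exact absurd hx hbc1
              · rfl
            have hF1 : F N b c = F N b (c - 1) + 1 := by
              have h0 := F_succ N b (c - 1) (by omega)
              rw [hbc1'] at h0
              rw [show c - 1 + 1 = c by omega] at h0
              simpa using h0
            have h1 : d ≤ F N b (c - 1) := hdle (c - 1) (by omega)
            have h2 : (0:ℤ) ≤ tterm N b U' c := tterm_nonneg _ _ _ _
            linarith
        · -- b c = false
          have hbc' : b c = false := by
            cases hx : b c
            · rfl
            · exact absurd hx hbc
          have hF1 : F N b (c + 1) = F N b c + -1 := by
            have h0 := F_succ N b c (by omega); rw [hbc'] at h0; simpa using h0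
          have h1 : d ≤ F N b (c + 1) := hdle (c + 1) (by omega)
          have h2 : (0:ℤ) ≤ tterm N b U' c := tterm_nonneg _ _ _ _
          linarith
      · -- c = N + 2
        have hceq : c = N + 2 := by omega
        subst hceq
        have hifs : ι * (if N + 2 = N + 2 then 1 else (-1:ℤ)) = ι := by
          rw [if_pos rfl]; ring
        have hifs2 : ω * (if N + 2 = 0 then 1 else (-1:ℤ)) = -ω := by
          rw [if_neg (by omega : ¬ N + 2 = 0)]; ring
        rw [hifs, hifs2]
        have h2 : (0:ℤ) ≤ tterm N b U' (N + 2) := tterm_nonneg _ _ _ _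
        by_cases hb1 : b (N + 1) = false
        · have hι1 : ι = 1 := by
            rw [hι]; unfold iot; rw [if_pos ⟨(hmem PAct.ins).2 hb1, hb1⟩]
          have h1 : d ≤ F N b (N + 2) := hdle (N + 2) (by omega)
          rw [hι1]
          linarith
        · have hb1' : b (N + 1) = true := by
            cases hx : b (N + 1)
            · exact absurd hx hb1
            · rfl
          have hF1 : F N b (N + 2) = F N b (N + 1) + 1 := by
            have h0 := F_succ N b (N + 1) (by omega); rw [hb1'] at h0; simpa using h0
          have h1 : d ≤ F N b (N + 1) := hdle (N + 1) (by omega)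
          linarith
  -- conclude
  unfold g
  rw [hiot, homg, ← hd, ← hι, ← hω]
  linarith


/-- `in`-step increases g by at most 2. -/
lemma g_act_in (N : ℕ) (b : ℕ → Bool) (U : Set PAct) (hb : b (N + 1) = false) :
    g N (Function.update b (N + 1) true) (U \ {PAct.ins}) ≤ g N b U + 2 := by
  set b' := Function.update b (N + 1) true with hb'
  set U' := U \ ({PAct.ins} : Set PAct) with hU'
  have hmem_ins : PAct.ins ∉ U' := by simp [hU']
  have hmem_outs : PAct.outs ∈ U' ↔ PAct.outs ∈ U := by simp [hU']
  have hmem_t : ∀ c, PAct.t c ∈ U' ↔ PAct.t c ∈ U := by intro c; simp [hU']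
  have hb'0 : b' 0 = b 0 := Function.update_of_ne (by omega) _ _
  have hιnew : iot N b' U' = 0 := by
    unfold iot; rw [if_neg]; rintro ⟨h1, -⟩; exact hmem_ins h1
  have hωnew : omg b' U' = omg b U := by
    unfold omg
    rw [hb'0]
    congr 1
    · exact propext (and_congr_left fun _ => hmem_outs)
  have hkk : kk N b' = kk N b + 1 := by
    rw [hb', kk_update N b (N + 1) (by omega) true, hb]; simp [tv]
  set ι := iot N b U with hι
  -- pointwise
  have key : M N b U + ι - 1 ≤ M N b' U' := by
    refine le_M _ _ _ fun c hc => ?_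
    have hMle : M N b U ≤ fU N b U c := M_le N b U hc
    have hF : F N b' c = F N b c + (if N + 1 < c then 1 else -1) := by
      rw [hb', F_update N b (N + 1) (by omega) true c, hb]
      by_cases hcc : N + 1 < c <;> simp [hcc, tv]
    have htt : tterm N b U c ≤ tterm N b' U' c := by
      by_cases hco : PAct.t c ∈ U ∧ PEnabled N b (PAct.t c)
      · obtain ⟨h1, h2⟩ := hco
        obtain ⟨he1, he2, he3, he4⟩ := h2
        have hcne : c ≠ N + 1 := by
          intro hceq; rw [hceq, hb] at he3; exact Bool.noConfusion he3
        have hen' : PEnabled N b' (PAct.t c) := by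
          refine ⟨he1, he2, ?_, ?_⟩
          · rw [hb', Function.update_of_ne hcne]; exact he3
          · rw [hb', Function.update_of_ne (by omega : c - 1 ≠ N + 1)]; exact he4
        have : tterm N b' U' c = 2 := by
          unfold tterm; rw [if_pos ⟨(hmem_t c).2 h1, hen'⟩]
        rw [this]; exact tterm_le_two _ _ _ _
      · have : tterm N b U c = 0 := by unfold tterm; rw [if_neg hco]
        rw [this]; exact tterm_nonneg _ _ _ _
    have hωn : omg b U * (if c = 0 then 1 else (-1:ℤ)) ≤ omg b' U' * (if c = 0 then 1 else -1) := by
      rw [hωnew]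
    unfold fU
    rw [hιnew]
    by_cases hc2 : c = N + 2
    · subst hc2
      rw [if_pos (by omega : N + 1 < N + 2)] at hF
      have hιle : ι ≤ 1 := iot_le_one _ _ _
      have : ι * (if N + 2 = N + 2 then 1 else (-1:ℤ)) = ι := by rw [if_pos rfl]; ring
      unfold fU at hMle
      rw [← hι, this] at hMle
      simp only [zero_mul, add_zero]
      linarith [htt, hωn]
    · rw [if_neg (by omega : ¬ N + 1 < c)] at hF
      have hιge : 0 ≤ ι := iot_nonneg _ _ _
      have : ι * (if c = N + 2 then 1 else (-1:ℤ)) = -ι := by rw [if_neg hc2]; ring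
      unfold fU at hMle
      rw [← hι, this] at hMle
      simp only [zero_mul, add_zero]
      linarith [htt, hωn]
  unfold g
  rw [hιnew, hωnew, hkk, ← hι]
  linarith


/-- `out`-step does not increase g. -/
lemma g_act_out (N : ℕ) (b : ℕ → Bool) (U : Set PAct) (hb : b 0 = true) :
    g N (Function.update b 0 false) (U \ {PAct.outs}) ≤ g N b U := by
  set b' := Function.update b 0 false with hb'
  set U' := U \ ({PAct.outs} : Set PAct) with hU'
  have hmem_outs : PAct.outs ∉ U' := by simp [hU']
  have hmem_ins : PAct.ins ∈ U' ↔ PAct.ins ∈ U := by simp [hU']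
  have hmem_t : ∀ c, PAct.t c ∈ U' ↔ PAct.t c ∈ U := by intro c; simp [hU']
  have hb'top : b' (N + 1) = b (N + 1) := Function.update_of_ne (by omega) _ _
  have hωnew : omg b' U' = 0 := by
    unfold omg; rw [if_neg]; rintro ⟨h1, -⟩; exact hmem_outs h1
  have hιnew : iot N b' U' = iot N b U := by
    unfold iot
    rw [hb'top]
    congr 1
    · exact propext (and_congr_left fun _ => hmem_ins)
  have hkk : kk N b' = kk N b - 1 := by
    rw [hb', kk_update N b 0 (by omega) false, hb]; simp [tv]
  set ω := omg b U with hω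
  have key : M N b U + ω - 1 ≤ M N b' U' := by
    refine le_M _ _ _ fun c hc => ?_
    have hMle : M N b U ≤ fU N b U c := M_le N b U hc
    have hF : F N b' c = F N b c + (if c = 0 then 1 else -1) := by
      rw [hb', F_update N b 0 (by omega) false c, hb]
      by_cases hcc : c = 0
      · subst hcc; rw [if_neg (by omega : ¬ 0 < 0)]; simp [tv]
      · rw [if_pos (by omega : 0 < c), if_neg hcc]; simp [tv]
    have htt : tterm N b U c ≤ tterm N b' U' c := by
      by_cases hco : PAct.t c ∈ U ∧ PEnabled N b (PAct.t c)
      · obtain ⟨h1, h2⟩ := hco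
        obtain ⟨he1, he2, he3, he4⟩ := h2
        have hcne1 : c ≠ 1 := by
          intro hceq
          rw [hceq] at he4; simp at he4; rw [hb] at he4; exact Bool.noConfusion he4
        have hen' : PEnabled N b' (PAct.t c) := by
          refine ⟨he1, he2, ?_, ?_⟩
          · rw [hb', Function.update_of_ne (by omega : c ≠ 0)]; exact he3
          · rw [hb', Function.update_of_ne (by omega : c - 1 ≠ 0)]; exact he4
        have : tterm N b' U' c = 2 := by
          unfold tterm; rw [if_pos ⟨(hmem_t c).2 h1, hen'⟩]
        rw [this]; exact tterm_le_two _ _ _ _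
      · have : tterm N b U c = 0 := by unfold tterm; rw [if_neg hco]
        rw [this]; exact tterm_nonneg _ _ _ _
    have hιn : iot N b U * (if c = N + 2 then 1 else (-1:ℤ)) ≤ iot N b' U' * (if c = N + 2 then 1 else -1) := by
      rw [hιnew]
    unfold fU
    by_cases hc0 : c = 0
    · subst hc0
      rw [if_pos rfl] at hF
      have hωle : ω ≤ 1 := omg_le_one _ _
      have h1 : ω * (if (0:ℕ) = 0 then 1 else (-1:ℤ)) = ω := by rw [if_pos rfl]; ring
      unfold fU at hMle
      rw [← hω, h1] at hMle
      rw [hωnew]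
      simp only [zero_mul, add_zero]
      linarith [htt, hιn]
    · rw [if_neg hc0] at hF
      have hωge : 0 ≤ ω := omg_nonneg _ _
      have h1 : ω * (if c = 0 then 1 else (-1:ℤ)) = -ω := by rw [if_neg hc0]; ring
      unfold fU at hMle
      rw [← hω, h1] at hMle
      rw [hωnew]
      simp only [zero_mul, add_zero]
      linarith [htt, hιn]
  unfold g
  rw [hιnew, hωnew, hkk, ← hω]
  linarith


/-- `t j`-step does not increase g. -/
lemma g_act_t (N : ℕ) (b : ℕ → Bool) (U : Set PAct) (j : ℕ)
    (hen : PEnabled N b (PAct.t j)) :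
    g N (Function.update (Function.update b j false) (j - 1) true) (U \ {PAct.t j})
      ≤ g N b U := by
  obtain ⟨hj1, hj2, hbj, hbj1⟩ := hen
  set b2 := Function.update b j false with hb2
  set b' := Function.update b2 (j - 1) true with hb'
  set U' := U \ ({PAct.t j} : Set PAct) with hU'
  have hmem_tj : PAct.t j ∉ U' := by simp [hU']
  have hmem_ins : PAct.ins ∈ U' ↔ PAct.ins ∈ U := by simp [hU']
  have hmem_outs : PAct.outs ∈ U' ↔ PAct.outs ∈ U := by simp [hU']
  have hmem_t : ∀ c, c ≠ j → (PAct.t c ∈ U' ↔ PAct.t c ∈ U) := by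
    intro c hcj; simp [hU', hcj]
  have hb2j1 : b2 (j - 1) = false := by
    rw [hb2, Function.update_of_ne (by omega : j - 1 ≠ j)]; exact hbj1
  -- values of b' at various points
  have hb'val : ∀ i, i ≠ j → i ≠ j - 1 → b' i = b i := by
    intro i h1 h2
    rw [hb', Function.update_of_ne h2, hb2, Function.update_of_ne h1]
  have hb'j : b' j = false := by
    rw [hb', Function.update_of_ne (by omega : j ≠ j - 1), hb2, Function.update_self]
  have hb'j1 : b' (j - 1) = true := by rw [hb', Function.update_self]
  have hkk : kk N b' = kk N b := by
    rw [hb', kk_update N b2 (j - 1) (by omega) true, hb2j1,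
        hb2, kk_update N b j (by omega) false, hbj]
    simp [tv]
  set ι := iot N b U with hι
  set ω := omg b U with hω
  set ι' := iot N b' U' with hι'
  set ω' := omg b' U' with hω'
  have hιmono : ι ≤ ι' := by
    rw [hι, hι']; unfold iot
    by_cases hco : PAct.ins ∈ U ∧ b (N + 1) = false
    · obtain ⟨h1, h2⟩ := hco
      have hjne : j ≠ N + 1 := by
        intro hje; rw [hje, h2] at hbj; exact Bool.noConfusion hbj
      rw [if_pos ⟨h1, h2⟩, if_pos ⟨hmem_ins.2 h1, by rw [hb'val (N+1) (by omega) (by omega)]; exact h2⟩]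
    · rw [if_neg hco]
      split <;> simp
  have hωmono : ω ≤ ω' := by
    rw [hω, hω']; unfold omg
    by_cases hco : PAct.outs ∈ U ∧ b 0 = true
    · obtain ⟨h1, h2⟩ := hco
      have hjne : j ≠ 1 := by
        intro hje; rw [hje] at hbj1; simp at hbj1; rw [h2] at hbj1; exact Bool.noConfusion hbj1
      rw [if_pos ⟨h1, h2⟩, if_pos ⟨hmem_outs.2 h1, by rw [hb'val 0 (by omega) (by omega)]; exact h2⟩]
    · rw [if_neg hco]
      split <;> simp
  have hι'le : ι' ≤ 1 := iot_le_one _ _ _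
  have hω'le : ω' ≤ 1 := omg_le_one _ _
  have key : M N b U - (ι' - ι) - (ω' - ω) ≤ M N b' U' := by
    refine le_M _ _ _ fun c hc => ?_
    have hMle : M N b U ≤ fU N b U c := M_le N b U hc
    have hF : F N b' c = F N b c + (if c = j then 2 else 0) := by
      rw [hb', F_update N b2 (j - 1) (by omega) true c, hb2j1,
          hb2, F_update N b j (by omega) false c, hbj]
      by_cases hcj : c = j
      · subst hcj
        rw [if_neg (by omega : ¬ c < c), if_pos (by omega : c - 1 < c), if_pos rfl]
        simp [tv]
        ring
      · rcases Nat.lt_or_ge c j with h | h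
        · rw [if_neg (by omega : ¬ j < c), if_neg (by omega : ¬ j - 1 < c), if_neg hcj]
          simp [tv]
        · rw [if_pos (by omega : j < c), if_pos (by omega : j - 1 < c), if_neg hcj]
          simp [tv]
    have htt : tterm N b U c - (if c = j then 2 else 0) ≤ tterm N b' U' c := by
      by_cases hcj : c = j
      · rw [if_pos hcj]
        have h1 := tterm_le_two N b U c
        have h2 := tterm_nonneg N b' U' c
        linarith
      · rw [if_neg hcj]
        by_cases hco : PAct.t c ∈ U ∧ PEnabled N b (PAct.t c)
        · obtain ⟨h1, h2⟩ := hco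
          obtain ⟨he1, he2, he3, he4⟩ := h2
          have hne1 : c ≠ j - 1 := by
            intro hce; rw [hce] at he3; rw [hbj1] at he3; exact Bool.noConfusion he3
          have hne2 : c - 1 ≠ j := by
            intro hce; rw [hce] at he4; rw [hbj] at he4; exact Bool.noConfusion he4
          have hne3 : c - 1 ≠ j - 1 := by omega
          have hen' : PEnabled N b' (PAct.t c) := by
            refine ⟨he1, he2, ?_, ?_⟩
            · rw [hb'val c hcj hne1]; exact he3
            · rw [hb'val (c-1) hne2 hne3]; exact he4
          have : tterm N b' U' c = 2 := by
            unfold tterm; rw [if_pos ⟨(hmem_t c hcj).2 h1, hen'⟩]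
          rw [this]; linarith [tterm_le_two N b U c]
        · have : tterm N b U c = 0 := by unfold tterm; rw [if_neg hco]
          rw [this]; linarith [tterm_nonneg N b' U' c]
    have hιn : ι * (if c = N + 2 then 1 else (-1:ℤ)) - (ι' - ι) ≤ ι' * (if c = N + 2 then 1 else -1) := by
      have h0 := iot_nonneg N b U
      rw [← hι] at h0
      split <;> nlinarith
    have hωn : ω * (if c = 0 then 1 else (-1:ℤ)) - (ω' - ω) ≤ ω' * (if c = 0 then 1 else -1) := by
      have h0 := omg_nonneg b U
      rw [← hω] at h0
      split <;> nlinarith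
    unfold fU
    unfold fU at hMle
    rw [← hι, ← hω] at hMle
    rw [← hι', ← hω']
    linarith [htt, hιn, hωn]
  unfold g
  rw [hkk, ← hι', ← hω', ← hι, ← hω]
  linarith


lemma count_le (N : ℕ) {c : PConf} {ls : List PLabel} (hp : PPath N c ls) :
    (ls.count PLabel.tick : ℤ)
      ≤ 2 * (ls.count (PLabel.act PAct.ins) : ℤ) + g N c.1 c.2 := by
  induction hp with
  | nil c =>
    simpa using g_nonneg N c.1 c.2
  | cons st p ih =>
    rename_i cc cc' l ls'
    cases st with
    | act b U a ha =>
      cases a with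
      | ins =>
        have hstep := g_act_in N b U ha
        have hcnt1 : ((PLabel.act PAct.ins :: ls').count PLabel.tick : ℤ)
            = (ls'.count PLabel.tick : ℤ) := by
          simp [List.count_cons]
        have hcnt2 : ((PLabel.act PAct.ins :: ls').count (PLabel.act PAct.ins) : ℤ)
            = (ls'.count (PLabel.act PAct.ins) : ℤ) + 1 := by
          simp [List.count_cons]
        rw [hcnt1, hcnt2]
        simp only [PUpdate] at ih
        linarith [ih]
      | outs =>
        have hstep := g_act_out N b U ha
        have hcnt1 : ((PLabel.act PAct.outs :: ls').count PLabel.tick : ℤ)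
            = (ls'.count PLabel.tick : ℤ) := by
          simp [List.count_cons]
        have hcnt2 : ((PLabel.act PAct.outs :: ls').count (PLabel.act PAct.ins) : ℤ)
            = (ls'.count (PLabel.act PAct.ins) : ℤ) := by
          simp [List.count_cons]
        rw [hcnt1, hcnt2]
        simp only [PUpdate] at ih
        linarith [ih]
      | t i =>
        have hstep := g_act_t N b U i ha
        have hcnt1 : ((PLabel.act (PAct.t i) :: ls').count PLabel.tick : ℤ)
            = (ls'.count PLabel.tick : ℤ) := by
          simp [List.count_cons]
        have hcnt2 : ((PLabel.act (PAct.t i) :: ls').count (PLabel.act PAct.ins) : ℤ)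
            = (ls'.count (PLabel.act PAct.ins) : ℤ) := by
          simp [List.count_cons]
        rw [hcnt1, hcnt2]
        simp only [PUpdate] at ih
        linarith [ih]
    | tick b U hU =>
      have hstep := g_tick N b U hU
      have hcnt1 : ((PLabel.tick :: ls').count PLabel.tick : ℤ)
          = (ls'.count PLabel.tick : ℤ) + 1 := by
        simp [List.count_cons]
      have hcnt2 : ((PLabel.tick :: ls').count (PLabel.act PAct.ins) : ℤ)
          = (ls'.count (PLabel.act PAct.ins) : ℤ) := by
        simp [List.count_cons]
      rw [hcnt1, hcnt2]
      linarith [ih]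

end
end PipeCert

/-- For every `N ≥ 1` and `n ≥ 1`, every `n`-admissible path in the PIPE transition
system contains at most `2n + (N + 1)` ticks. -/
theorem pipe_ticks_le (N n : ℕ) (hN : 1 ≤ N) (hn : 1 ≤ n) (ls : List PLabel)
    (h : PipeAdmissible N n ls) : ls.count PLabel.tick ≤ 2 * n + (N + 1) := by
  obtain ⟨hp, hins, -⟩ := h
  have h2 := PipeCert.count_le N hp
  have h3 := PipeCert.g_init N
  have h4 : (ls.count PLabel.tick : ℤ)
      ≤ 2 * (ls.count (PLabel.act PAct.ins) : ℤ) + 1 := by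
    exact le_trans h2 (by linarith)
  omega
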